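/- arXiv:2510.03593 — 3 statements merged into one kernel-verified Lean document; each statement's English description precedes it below -/
import Mathlib

section
/- Let μ, ω ∈ ℝ with ω > 0 and set λ = μ + iω. Let g₂₀, g₁₁, g₀₂ ∈ ℂ and define h₂₀ = g₂₀/λ, h₁₁ = g₁₁/conj(λ), h₀₂ = g₀₂/(2·conj(λ) - λ). Define φ : ℂ → ℂ by φ(w) = w + (h₂₀/2) w² + h₁₁ w w̄ + (h₀₂/2) w̄², and G : ℂ → ℂ by G(z) = λ z + (g₂₀/2) z² + g₁₁ z z̄ + (g₀₂/2) z̄². Then there exists C > 0 such that for all w ∈ ℂ with |w| ≤ 1, |(1 + h₂₀ w + h₁₁ w̄)·(λ w) + (h₁₁ w + h₀₂ w̄)·conj(λ w) - G(φ(w))| ≤ C |w|³. (That is, the near-identity change of coordinates z = φ(w) with these coefficients removes all quadratic terms of the planar vector field G, transforming it into the linear field λw up to cubic-order errors.) -/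
/-!
Write `Q` for the quadratic part of `G`. Because `h₂₀ λ = g₂₀`, `h₁₁ λ̄ = g₁₁` and
`h₀₂ (2λ̄ - λ) = g₀₂` (the homological equations of the three resonance-free monomials
`w²`, `w w̄`, `w̄²`), the quadratic terms of the chain-rule derivative of `φ` cancel those of
`G ∘ φ` exactly, and the error is `Q(w) - Q(φ(w))`. Since `φ(w) - w = O(|w|²)` and
`Q(z) - Q(w) = O(|z - w| (|z| + |w|))`, this error is `O(|w|³)` on the unit disc.
-/

def quadForm (a b c z : ℂ) : ℂ := a * z ^ 2 + b * z * star z + c * star z ^ 2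

section quadForm

variable (a b c : ℂ)

theorem norm_quadForm_le (z : ℂ) :
    ‖quadForm a b c z‖ ≤ (‖a‖ + ‖b‖ + ‖c‖) * ‖z‖ ^ 2 := by
  unfold quadForm
  calc ‖a * z ^ 2 + b * z * star z + c * star z ^ 2‖
      ≤ ‖a * z ^ 2‖ + ‖b * z * star z‖ + ‖c * star z ^ 2‖ := norm_add₃_le
    _ = (‖a‖ + ‖b‖ + ‖c‖) * ‖z‖ ^ 2 := by
      simp only [norm_mul, norm_pow, norm_star]; ring

theorem norm_quadForm_sub_quadForm_le (z w : ℂ) :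
    ‖quadForm a b c z - quadForm a b c w‖
      ≤ (‖a‖ + ‖b‖ + ‖c‖) * (‖z - w‖ * (‖z‖ + ‖w‖)) := by
  have hsq : ∀ x y : ℂ, ‖x ^ 2 - y ^ 2‖ ≤ ‖x - y‖ * (‖x‖ + ‖y‖) := fun x y => by
    rw [sq_sub_sq, norm_mul, mul_comm]
    gcongr
    exact norm_add_le x y
  have hmix : ‖z * star z - w * star w‖ ≤ ‖z - w‖ * (‖z‖ + ‖w‖) := by
    rw [show z * star z - w * star w = (z - w) * star z + w * star (z - w) by
      rw [star_sub]; ring]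
    refine (norm_add_le _ _).trans (le_of_eq ?_)
    simp only [norm_mul, norm_star]; ring
  have hconj : ‖star z ^ 2 - star w ^ 2‖ ≤ ‖z - w‖ * (‖z‖ + ‖w‖) := by
    simpa only [← star_sub, norm_star] using hsq (star z) (star w)
  have hsplit : quadForm a b c z - quadForm a b c w
      = a * (z ^ 2 - w ^ 2) + b * (z * star z - w * star w)
        + c * (star z ^ 2 - star w ^ 2) := by
    unfold quadForm; ring
  rw [hsplit]
  refine norm_add₃_le.trans ?_
  simp only [norm_mul, add_mul]
  gcongr
  exact hsq z w

theorem exists_norm_quadForm_add_quadForm_sub_le (d e f : ℂ) :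
    ∃ C > 0, ∀ w : ℂ, ‖w‖ ≤ 1 →
      ‖quadForm a b c (w + quadForm d e f w) - quadForm a b c w‖ ≤ C * ‖w‖ ^ 3 := by
  set A := ‖a‖ + ‖b‖ + ‖c‖
  set K := ‖d‖ + ‖e‖ + ‖f‖
  refine ⟨A * (K * (2 + K)) + 1, by positivity, fun w hw => ?_⟩
  have hq : ‖quadForm d e f w‖ ≤ K * ‖w‖ := by
    refine (norm_quadForm_le d e f w).trans ?_
    rw [sq]
    gcongr
    exact mul_le_of_le_one_left (norm_nonneg w) hw
  have hsum : ‖w + quadForm d e f w‖ + ‖w‖ ≤ (2 + K) * ‖w‖ := by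
    linarith [norm_add_le w (quadForm d e f w)]
  calc ‖quadForm a b c (w + quadForm d e f w) - quadForm a b c w‖
      ≤ A * (‖quadForm d e f w‖ * (‖w + quadForm d e f w‖ + ‖w‖)) := by
        simpa using norm_quadForm_sub_quadForm_le a b c (w + quadForm d e f w) w
    _ ≤ A * ((K * ‖w‖ ^ 2) * ((2 + K) * ‖w‖)) := by
        gcongr
        exact norm_quadForm_le d e f w
    _ = A * (K * (2 + K)) * ‖w‖ ^ 3 := by ring
    _ ≤ (A * (K * (2 + K)) + 1) * ‖w‖ ^ 3 := by gcongr; linarith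

end quadForm

theorem chainRule_sub_comp_eq_of_homological (lam g20 g11 g02 h20 h11 h02 w : ℂ)
    (h20_eq : g20 = h20 * lam) (h11_eq : g11 = h11 * star lam)
    (h02_eq : g02 = h02 * (2 * star lam - lam)) :
    (1 + h20 * w + h11 * star w) * (lam * w) + (h11 * w + h02 * star w) * star (lam * w)
        - (lam * (w + quadForm (h20 / 2) h11 (h02 / 2) w)
          + quadForm (g20 / 2) g11 (g02 / 2) (w + quadForm (h20 / 2) h11 (h02 / 2) w))
      = quadForm (g20 / 2) g11 (g02 / 2) w
        - quadForm (g20 / 2) g11 (g02 / 2) (w + quadForm (h20 / 2) h11 (h02 / 2) w) := by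
  subst h20_eq h11_eq h02_eq
  simp only [quadForm, star_mul']
  ring

theorem two_mul_star_sub_ne_zero_of_im_ne_zero {z : ℂ} (hz : z.im ≠ 0) :
    2 * star z - z ≠ 0 := by
  intro h
  have him := congrArg Complex.im h
  simp only [Complex.sub_im, Complex.mul_im, Complex.star_def, Complex.conj_im,
    Complex.conj_re, Complex.zero_im] at him
  norm_num at him
  exact hz (by linarith)

/-- the near-identity transformation `z = φ(w)` with quadratic coefficients
`h₂₀ = g₂₀/λ`, `h₁₁ = g₁₁/λ̄`, `h₀₂ = g₀₂/(2λ̄ - λ)` removes all quadratic terms of the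
planar field `G(z) = λz + (g₂₀/2)z² + g₁₁ z z̄ + (g₀₂/2) z̄²`: the chain-rule derivative
of `φ` along `w' = λ w` agrees with `G ∘ φ` up to a cubic-order error. -/
theorem hopf_quadratic_terms_removal
    (μ ω : ℝ) (hω : 0 < ω) (lam : ℂ) (hlam : lam = μ + ω * Complex.I)
    (g20 g11 g02 h20 h11 h02 : ℂ)
    (hh20 : h20 = g20 / lam) (hh11 : h11 = g11 / star lam)
    (hh02 : h02 = g02 / (2 * star lam - lam))
    (φ G : ℂ → ℂ)
    (hφ : ∀ w : ℂ, φ w = w + h20 / 2 * w ^ 2 + h11 * w * star w + h02 / 2 * (star w) ^ 2)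
    (hG : ∀ z : ℂ, G z = lam * z + g20 / 2 * z ^ 2 + g11 * z * star z + g02 / 2 * (star z) ^ 2) :
    ∃ C > 0, ∀ w : ℂ, ‖w‖ ≤ 1 →
      ‖(1 + h20 * w + h11 * star w) * (lam * w)
          + (h11 * w + h02 * star w) * star (lam * w) - G (φ w)‖
        ≤ C * (‖w‖) ^ 3 := by
  have him : lam.im ≠ 0 := by simp [hlam, hω.ne']
  have hlam0 : lam ≠ 0 := fun h => him (by simp [h])
  have hφ' : ∀ w, φ w = w + quadForm (h20 / 2) h11 (h02 / 2) w := fun w => by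
    rw [hφ, quadForm]; ring
  have hG' : ∀ z, G z = lam * z + quadForm (g20 / 2) g11 (g02 / 2) z := fun z => by
    rw [hG, quadForm]; ring
  obtain ⟨C, hC, hbound⟩ :=
    exists_norm_quadForm_add_quadForm_sub_le (g20 / 2) g11 (g02 / 2) (h20 / 2) h11 (h02 / 2)
  refine ⟨C, hC, fun w hw => ?_⟩
  rw [hG', hφ', chainRule_sub_comp_eq_of_homological lam g20 g11 g02 h20 h11 h02 w
    (by rw [hh20, div_mul_cancel₀ _ hlam0])
    (by rw [hh11, div_mul_cancel₀ _ (star_ne_zero.mpr hlam0)])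
    (by rw [hh02, div_mul_cancel₀ _ (two_mul_star_sub_ne_zero_of_im_ne_zero him)]),
    norm_sub_rev]
  exact hbound w hw
end

section
/- Let β, c, δ, α be positive reals with c > δ and α(c - δ) > δ. Define f : ℝ² → ℝ² by f₁(x₁, x₂) = β x₁ (1 - x₁)(1 + α x₁) - c α x₁ x₂ and f₂(x₁, x₂) = -δ x₂ (1 + α x₁) + c α x₁ x₂, and set x* = (δ/(α(c-δ)), (β/(α(c-δ)))·(1 - δ/(α(c-δ)))). Then f(x*) = (0,0), and the trace of the Jacobian matrix of f at x*, namely ∂f₁/∂x₁(x*) + ∂f₂/∂x₂(x*), equals zero if and only if α = (c+δ)/(c-δ). -/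
/-!
Both components factor through per-capita rates, `f₁ = x₁ · g(x₁, x₂)` and `f₂ = x₂ · h(x₁)`,
and `x*` is where `g` and `h` vanish. At such a point the product rule collapses to
`∂f₁/∂x₁ = x₁ · ∂g/∂x₁ = β x₁ (α - 1 - 2α x₁)` and `∂f₂/∂x₂ = h(x₁) = 0`, and substituting
`x₁ = δ / (α (c - δ))` turns `α - 1 - 2α x₁` into `α - (c + δ)/(c - δ)`.
-/

theorem HasDerivAt.id_mul_of_eq_zero {𝕜 : Type*} [NontriviallyNormedField 𝕜] {g : 𝕜 → 𝕜}
    {g' x : 𝕜} (hg : HasDerivAt g g' x) (hx : g x = 0) :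
    HasDerivAt (fun s => s * g s) (x * g') x := by
  simpa [hx] using (hasDerivAt_id' x).fun_mul hg

namespace PredatorPrey

variable (β c δ α : ℝ)

def preyPerCapita (x₁ x₂ : ℝ) : ℝ :=
  β * (1 - x₁) * (1 + α * x₁) - c * α * x₂

def predatorPerCapita (x₁ : ℝ) : ℝ :=
  -δ * (1 + α * x₁) + c * α * x₁

theorem hasDerivAt_preyPerCapita (x₁ x₂ : ℝ) :
    HasDerivAt (fun s => preyPerCapita β c α s x₂) (β * (α - 1 - 2 * α * x₁)) x₁ := by
  have h := ((((hasDerivAt_id' x₁).const_sub 1).const_mul β).fun_mul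
    (((hasDerivAt_id' x₁).const_mul α).const_add 1)).sub_const (c * α * x₂)
  exact h.congr_deriv (by ring)

variable {β c δ α}

theorem predatorPerCapita_equilibrium (hα : α ≠ 0) (hcδ : c - δ ≠ 0) :
    predatorPerCapita c δ α (δ / (α * (c - δ))) = 0 := by
  unfold predatorPerCapita
  field_simp
  ring

theorem preyPerCapita_equilibrium (hα : α ≠ 0) (hcδ : c - δ ≠ 0) :
    preyPerCapita β c α (δ / (α * (c - δ)))
      (β / (α * (c - δ)) * (1 - δ / (α * (c - δ)))) = 0 := by
  unfold preyPerCapita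
  field_simp
  ring

theorem sub_one_sub_two_mul_equilibrium (hα : α ≠ 0) (hcδ : c - δ ≠ 0) :
    α - 1 - 2 * α * (δ / (α * (c - δ))) = α - (c + δ) / (c - δ) := by
  field_simp
  ring

end PredatorPrey

open PredatorPrey in
theorem predator_prey_trace_zero_iff_general
    (β c δ α : ℝ) (hβ : 0 < β) (hδ : 0 < δ)
    (hαcδ : δ < α * (c - δ))
    (f₁ f₂ : ℝ → ℝ → ℝ)
    (hf₁ : ∀ x₁ x₂, f₁ x₁ x₂ = β * x₁ * (1 - x₁) * (1 + α * x₁) - c * α * x₁ * x₂)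
    (hf₂ : ∀ x₁ x₂, f₂ x₁ x₂ = -δ * x₂ * (1 + α * x₁) + c * α * x₁ * x₂)
    (x₁s x₂s : ℝ)
    (hx₁s : x₁s = δ / (α * (c - δ)))
    (hx₂s : x₂s = β / (α * (c - δ)) * (1 - δ / (α * (c - δ)))) :
    f₁ x₁s x₂s = 0 ∧ f₂ x₁s x₂s = 0 ∧
      (deriv (fun s => f₁ s x₂s) x₁s + deriv (fun s => f₂ x₁s s) x₂s = 0 ↔
        α = (c + δ) / (c - δ)) := by
  have hD : 0 < α * (c - δ) := hδ.trans hαcδ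
  obtain ⟨hα, hcδ⟩ := mul_ne_zero_iff.mp hD.ne'
  have hprey : f₁ = fun x₁ x₂ => x₁ * preyPerCapita β c α x₁ x₂ := by
    ext x₁ x₂; rw [hf₁, preyPerCapita]; ring
  have hpredator : f₂ = fun x₁ x₂ => x₂ * predatorPerCapita c δ α x₁ := by
    ext x₁ x₂; rw [hf₂, predatorPerCapita]; ring
  have hprey_rate : preyPerCapita β c α x₁s x₂s = 0 :=
    hx₁s ▸ hx₂s ▸ preyPerCapita_equilibrium hα hcδ
  have hpredator_rate : predatorPerCapita c δ α x₁s = 0 :=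
    hx₁s ▸ predatorPerCapita_equilibrium hα hcδ
  have hslope : α - 1 - 2 * α * x₁s = α - (c + δ) / (c - δ) :=
    hx₁s ▸ sub_one_sub_two_mul_equilibrium hα hcδ
  subst hprey hpredator
  refine ⟨by simp [hprey_rate], by simp [hpredator_rate], ?_⟩
  have hx₁s_pos : 0 < x₁s := hx₁s ▸ div_pos hδ hD
  beta_reduce
  rw [((hasDerivAt_preyPerCapita β c α x₁s x₂s).id_mul_of_eq_zero hprey_rate).deriv,
    hpredator_rate, hslope]
  simp only [mul_zero, deriv_const, add_zero]
  simp [hx₁s_pos.ne', hβ.ne', sub_eq_zero]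

/-- the positive equilibrium `x*` of the time-rescaled predator-prey field
is a zero of the field, and the trace of the Jacobian at `x*` (the sum of the partial
derivatives `∂f₁/∂x₁(x*) + ∂f₂/∂x₂(x*)`) vanishes if and only if `α = (c+δ)/(c-δ)`. -/
theorem predator_prey_trace_zero_iff
    (β c δ α : ℝ) (hβ : 0 < β) (hc : 0 < c) (hδ : 0 < δ) (hα : 0 < α)
    (hcδ : δ < c) (hαcδ : δ < α * (c - δ))
    (f₁ f₂ : ℝ → ℝ → ℝ)
    (hf₁ : ∀ x₁ x₂, f₁ x₁ x₂ = β * x₁ * (1 - x₁) * (1 + α * x₁) - c * α * x₁ * x₂)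
    (hf₂ : ∀ x₁ x₂, f₂ x₁ x₂ = -δ * x₂ * (1 + α * x₁) + c * α * x₁ * x₂)
    (x₁s x₂s : ℝ)
    (hx₁s : x₁s = δ / (α * (c - δ)))
    (hx₂s : x₂s = β / (α * (c - δ)) * (1 - δ / (α * (c - δ)))) :
    f₁ x₁s x₂s = 0 ∧ f₂ x₁s x₂s = 0 ∧
      (deriv (fun s => f₁ s x₂s) x₁s + deriv (fun s => f₂ x₁s s) x₂s = 0 ↔
        α = (c + δ) / (c - δ)) :=
  predator_prey_trace_zero_iff_general β c δ α hβ hδ hαcδ f₁ f₂ hf₁ hf₂ x₁s x₂s hx₁s hx₂s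
end

section
/- Let β, c, δ be positive reals with c > δ, and set α = (c+δ)/(c-δ). Define f : ℝ² → ℝ² by f₁(x₁, x₂) = β x₁ (1 - x₁)(1 + α x₁) - c α x₁ x₂ and f₂(x₁, x₂) = -δ x₂ (1 + α x₁) + c α x₁ x₂, and set x* = (δ/(c+δ), β c/(c+δ)²). Then f(x*) = (0,0), and the Jacobian matrix J of f at x* satisfies trace(J) = 0 and det(J) = β c² δ/((c-δ)(c+δ)) > 0; consequently the complex eigenvalues of J are purely imaginary, equal to ± i·c·√(βδ/((c-δ)(c+δ))). -/
/-!
At the Hopf value `α = (c + δ)/(c - δ)` one has `α x₁* = δ/(c - δ)`, so `1 + α x₁* = c/(c - δ)`.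
This makes both diagonal entries of the Jacobian vanish, leaving the antidiagonal matrix
`!![0, -cδ/(c - δ); βc/(c + δ), 0]`. A traceless `2 × 2` matrix has characteristic polynomial
`X² + det = (X - r)(X + r)` whenever `r² = -det`, and `r = i c √(βδ/((c - δ)(c + δ)))` is such a root.
-/

open Polynomial

theorem Matrix.roots_charpoly_fin_two_of_trace_eq_zero {R : Type*} [CommRing R] [IsDomain R]
    (A : Matrix (Fin 2) (Fin 2) R) (htr : A.trace = 0) {r : R} (hr : r ^ 2 = -A.det) :
    A.charpoly.roots = {r, -r} := by
  have hfactor : A.charpoly = (X - C r) * (X - C (-r)) := by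
    rw [A.charpoly_fin_two, htr, ← neg_neg A.det, ← hr]
    simp only [map_neg, map_pow, map_zero]
    ring
  rw [hfactor, roots_mul (mul_ne_zero (X_sub_C_ne_zero r) (X_sub_C_ne_zero (-r))),
    roots_X_sub_C, roots_X_sub_C]
  rfl

theorem Complex.sq_I_mul_ofReal_mul_sqrt (a : ℝ) {x : ℝ} (hx : 0 ≤ x) :
    (I * a * (√x : ℂ)) ^ 2 = -((a ^ 2 * x : ℝ) : ℂ) := by
  rw [mul_pow, mul_pow, I_sq, ← ofReal_pow, ← ofReal_pow, Real.sq_sqrt hx]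
  push_cast
  ring

def preyRate (β c α x₁ x₂ : ℝ) : ℝ := β * x₁ * (1 - x₁) * (1 + α * x₁) - c * α * x₁ * x₂

def predatorRate (δ c α x₁ x₂ : ℝ) : ℝ := -δ * x₂ * (1 + α * x₁) + c * α * x₁ * x₂

section PartialDerivatives

variable (β c δ α : ℝ)

theorem hasDerivAt_preyRate_fst (x₁ x₂ : ℝ) :
    HasDerivAt (fun s => preyRate β c α s x₂)
      (β * ((1 - x₁) * (1 + α * x₁) - x₁ * (1 + α * x₁) + α * x₁ * (1 - x₁)) - c * α * x₂) x₁ :=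
  (((((hasDerivAt_id' x₁).const_mul β).mul ((hasDerivAt_id' x₁).const_sub 1)).mul
      (((hasDerivAt_id' x₁).const_mul α).const_add 1)).sub
      (((hasDerivAt_id' x₁).const_mul (c * α)).mul_const x₂)).congr_deriv
    (by simp only [Pi.mul_apply]; ring)

theorem hasDerivAt_preyRate_snd (x₁ x₂ : ℝ) :
    HasDerivAt (fun s => preyRate β c α x₁ s) (-(c * α * x₁)) x₂ :=
  ((hasDerivAt_id' x₂).const_mul (c * α * x₁)).const_sub _ |>.congr_deriv (by ring)

theorem hasDerivAt_predatorRate_fst (x₁ x₂ : ℝ) :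
    HasDerivAt (fun s => predatorRate δ c α s x₂) ((c - δ) * α * x₂) x₁ :=
  ((((hasDerivAt_id' x₁).const_mul α).const_add 1).const_mul (-δ * x₂)).add
      (((hasDerivAt_id' x₁).const_mul (c * α)).mul_const x₂) |>.congr_deriv (by ring)

theorem hasDerivAt_predatorRate_snd (x₁ x₂ : ℝ) :
    HasDerivAt (fun s => predatorRate δ c α x₁ s) (c * α * x₁ - δ * (1 + α * x₁)) x₂ :=
  (((hasDerivAt_id' x₂).const_mul (-δ)).mul_const (1 + α * x₁)).add
      ((hasDerivAt_id' x₂).const_mul (c * α * x₁)) |>.congr_deriv (by ring)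

end PartialDerivatives

section HopfEquilibrium

variable {β c δ α x₁ x₂ : ℝ}

theorem preyRate_eq_zero_of_hopf (hδ : 0 < δ) (hcδ : δ < c) (hα : α = (c + δ) / (c - δ))
    (hx₁ : x₁ = δ / (c + δ)) (hx₂ : x₂ = β * c / (c + δ) ^ 2) : preyRate β c α x₁ x₂ = 0 := by
  have : c - δ ≠ 0 := sub_ne_zero.2 hcδ.ne'
  have : c + δ ≠ 0 := by linarith
  rw [preyRate, hα, hx₁, hx₂]
  field_simp
  ring

theorem predatorRate_eq_zero_of_hopf (hδ : 0 < δ) (hcδ : δ < c) (hα : α = (c + δ) / (c - δ))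
    (hx₁ : x₁ = δ / (c + δ)) : predatorRate δ c α x₁ x₂ = 0 := by
  have : c - δ ≠ 0 := sub_ne_zero.2 hcδ.ne'
  have : c + δ ≠ 0 := by linarith
  rw [predatorRate, hα, hx₁]
  field_simp
  ring

theorem jacobian_eq_of_hopf (hδ : 0 < δ) (hcδ : δ < c) (hα : α = (c + δ) / (c - δ))
    (hx₁ : x₁ = δ / (c + δ)) (hx₂ : x₂ = β * c / (c + δ) ^ 2) :
    !![deriv (fun s => preyRate β c α s x₂) x₁, deriv (fun s => preyRate β c α x₁ s) x₂;
        deriv (fun s => predatorRate δ c α s x₂) x₁, deriv (fun s => predatorRate δ c α x₁ s) x₂] =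
      !![0, -(c * δ / (c - δ)); β * c / (c + δ), 0] := by
  have : c - δ ≠ 0 := sub_ne_zero.2 hcδ.ne'
  have : c + δ ≠ 0 := by linarith
  rw [(hasDerivAt_preyRate_fst ..).deriv, (hasDerivAt_preyRate_snd ..).deriv,
    (hasDerivAt_predatorRate_fst ..).deriv, (hasDerivAt_predatorRate_snd ..).deriv, hα, hx₁, hx₂]
  ext i j
  fin_cases i <;> fin_cases j <;>
    simp only [Fin.zero_eta, Fin.mk_one, Matrix.of_apply, Matrix.cons_val', Matrix.cons_val_zero,
      Matrix.cons_val_one, Matrix.cons_val_fin_one] <;>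
    field_simp <;> ring

end HopfEquilibrium

theorem predator_prey_hopf_eigenvalues_general
    (β c δ : ℝ) (hβ : 0 < β) (hδ : 0 < δ) (hcδ : δ < c)
    (α : ℝ) (hα : α = (c + δ) / (c - δ))
    (f₁ f₂ : ℝ → ℝ → ℝ)
    (hf₁ : ∀ x₁ x₂, f₁ x₁ x₂ = β * x₁ * (1 - x₁) * (1 + α * x₁) - c * α * x₁ * x₂)
    (hf₂ : ∀ x₁ x₂, f₂ x₁ x₂ = -δ * x₂ * (1 + α * x₁) + c * α * x₁ * x₂)
    (x₁s x₂s : ℝ) (hx₁s : x₁s = δ / (c + δ)) (hx₂s : x₂s = β * c / (c + δ) ^ 2)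
    (J : Matrix (Fin 2) (Fin 2) ℝ)
    (hJ : J = !![deriv (fun s => f₁ s x₂s) x₁s, deriv (fun s => f₁ x₁s s) x₂s;
                 deriv (fun s => f₂ s x₂s) x₁s, deriv (fun s => f₂ x₁s s) x₂s]) :
    f₁ x₁s x₂s = 0 ∧ f₂ x₁s x₂s = 0 ∧ J.trace = 0 ∧
    J.det = β * c ^ 2 * δ / ((c - δ) * (c + δ)) ∧ 0 < J.det ∧
    (J.map Complex.ofReal).charpoly.roots =
      {Complex.I * (c : ℂ) * (Real.sqrt (β * δ / ((c - δ) * (c + δ))) : ℂ),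
       -(Complex.I * (c : ℂ) * (Real.sqrt (β * δ / ((c - δ) * (c + δ))) : ℂ))} := by
  obtain rfl : f₁ = preyRate β c α := funext₂ hf₁
  obtain rfl : f₂ = predatorRate δ c α := funext₂ hf₂
  have hJ_eq : J = !![0, -(c * δ / (c - δ)); β * c / (c + δ), 0] :=
    hJ.trans (jacobian_eq_of_hopf hδ hcδ hα hx₁s hx₂s)
  have hc : 0 < c := hδ.trans hcδ
  have htr : J.trace = 0 := by simp [hJ_eq, Matrix.trace_fin_two]
  have hdet : J.det = β * c ^ 2 * δ / ((c - δ) * (c + δ)) := by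
    rw [hJ_eq, Matrix.det_fin_two_of]
    field_simp
    ring
  refine ⟨preyRate_eq_zero_of_hopf hδ hcδ hα hx₁s hx₂s, predatorRate_eq_zero_of_hopf hδ hcδ hα hx₁s,
    htr, hdet, hdet ▸ by positivity, ?_⟩
  apply Matrix.roots_charpoly_fin_two_of_trace_eq_zero
  · exact (AddMonoidHom.map_trace Complex.ofRealHom J).symm.trans (by simp [htr])
  · have hdetℂ : (J.map Complex.ofReal).det = J.det := (Complex.ofRealHom.map_det J).symm
    rw [Complex.sq_I_mul_ofReal_mul_sqrt _ (by positivity), hdetℂ, hdet]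
    push_cast
    ring

/-- at the Hopf value `α = (c+δ)/(c-δ)`, the equilibrium
`x* = (δ/(c+δ), βc/(c+δ)²)` of the time-rescaled predator-prey field is a zero of the
field, the Jacobian `J` there has zero trace and determinant `βc²δ/((c-δ)(c+δ)) > 0`,
and its complex eigenvalues (roots of the characteristic polynomial) are exactly
`± i c √(βδ/((c-δ)(c+δ)))`. -/
theorem predator_prey_hopf_eigenvalues
    (β c δ : ℝ) (hβ : 0 < β) (hc : 0 < c) (hδ : 0 < δ) (hcδ : δ < c)
    (α : ℝ) (hα : α = (c + δ) / (c - δ))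
    (f₁ f₂ : ℝ → ℝ → ℝ)
    (hf₁ : ∀ x₁ x₂, f₁ x₁ x₂ = β * x₁ * (1 - x₁) * (1 + α * x₁) - c * α * x₁ * x₂)
    (hf₂ : ∀ x₁ x₂, f₂ x₁ x₂ = -δ * x₂ * (1 + α * x₁) + c * α * x₁ * x₂)
    (x₁s x₂s : ℝ) (hx₁s : x₁s = δ / (c + δ)) (hx₂s : x₂s = β * c / (c + δ) ^ 2)
    (J : Matrix (Fin 2) (Fin 2) ℝ)
    (hJ : J = !![deriv (fun s => f₁ s x₂s) x₁s, deriv (fun s => f₁ x₁s s) x₂s;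
                 deriv (fun s => f₂ s x₂s) x₁s, deriv (fun s => f₂ x₁s s) x₂s]) :
    f₁ x₁s x₂s = 0 ∧ f₂ x₁s x₂s = 0 ∧ J.trace = 0 ∧
    J.det = β * c ^ 2 * δ / ((c - δ) * (c + δ)) ∧ 0 < J.det ∧
    (J.map Complex.ofReal).charpoly.roots =
      {Complex.I * (c : ℂ) * (Real.sqrt (β * δ / ((c - δ) * (c + δ))) : ℂ),
       -(Complex.I * (c : ℂ) * (Real.sqrt (β * δ / ((c - δ) * (c + δ))) : ℂ))} :=
  predator_prey_hopf_eigenvalues_general β c δ hβ hδ hcδ α hα f₁ f₂ hf₁ hf₂ x₁s x₂s hx₁s hx₂s J hJ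
end
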